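/- arXiv:2003.04926 — 7 statements merged into one kernel-verified Lean document; each statement's English description precedes it below -/
import Mathlib

section
/- Let G be a d-regular graph on 2N vertices admitting a unitary signing, i.e., a Hermitian matrix A with |A_{uv}| = 1 whenever uv is an edge of G, A_{uv} = 0 otherwise, and A² = d·I. Then any induced subgraph of G on a set of more than N vertices has maximum degree at least √d. -/
/-!
Because `A² = d`, the eigenvalues of the Hermitian matrix `A` are `±√d`, and because `G` has no
loops, `trace A = 0`, so `√d` occurs with multiplicity `N`. The `√d`-eigenspace therefore has
dimension `N` and meets the space of vectors supported on `U`, of dimension `|U| > N`, in some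
`x ≠ 0`. Reading `A x = √d x` at a coordinate `u ∈ U` where `|x u|` is maximal gives
`√d |x u| ≤ deg_U(u) |x u|`.
-/

open Finset Matrix Module

section

variable {V : Type*} [Fintype V]

theorem SimpleGraph.exists_norm_le_card_adj_of_mulVec_eq_smul {𝕜 : Type*} [NormedField 𝕜]
    (G : SimpleGraph V) [DecidableRel G.Adj] {A : Matrix V V 𝕜}
    (hEdge : ∀ u v, G.Adj u v → ‖A u v‖ ≤ 1) (hNonEdge : ∀ u v, ¬ G.Adj u v → A u v = 0)
    {U : Finset V} {x : V → 𝕜} {μ : 𝕜} (hx : x ≠ 0) (hxU : ∀ v ∉ U, x v = 0)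
    (hμ : A *ᵥ x = μ • x) :
    ∃ u ∈ U, ‖μ‖ ≤ #{v ∈ U | G.Adj u v} := by
  obtain ⟨w, hw⟩ := Function.ne_iff.mp hx
  have hwU : w ∈ U := by_contra fun h => hw (hxU w h)
  obtain ⟨u, hu, hmax⟩ := U.exists_max_image (‖x ·‖) ⟨w, hwU⟩
  refine ⟨u, hu, le_of_mul_le_mul_right ?_ ((norm_pos_iff.2 hw).trans_le (hmax w hwU))⟩
  have hrow : (A *ᵥ x) u = ∑ v ∈ U with G.Adj u v, A u v * x v := by
    refine (sum_subset (subset_univ _) fun v _ hv => show A u v * x v = 0 from ?_).symm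
    by_cases hadj : G.Adj u v
    · rw [hxU v fun hvU => hv (mem_filter.2 ⟨hvU, hadj⟩), mul_zero]
    · rw [hNonEdge u v hadj, zero_mul]
  calc ‖μ‖ * ‖x u‖ = ‖(A *ᵥ x) u‖ := by rw [hμ, Pi.smul_apply, smul_eq_mul, norm_mul]
    _ ≤ ∑ v ∈ U with G.Adj u v, ‖A u v * x v‖ := hrow ▸ norm_sum_le _ _
    _ ≤ ∑ v ∈ U with G.Adj u v, ‖x u‖ := by
      refine sum_le_sum fun v hv => ?_
      obtain ⟨hvU, hadj⟩ := mem_filter.1 hv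
      rw [norm_mul, ← one_mul ‖x u‖]
      exact mul_le_mul (hEdge u v hadj) (hmax v hvU) (norm_nonneg _) zero_le_one
    _ = #{v ∈ U | G.Adj u v} * ‖x u‖ := by rw [sum_const, nsmul_eq_mul]

theorem Fintype.two_mul_card_filter_eq_of_sum_eq_zero {ι : Type*} [Fintype ι] {f : ι → ℝ}
    {s : ℝ} (hs : s ≠ 0) (hf : ∀ i, f i = s ∨ f i = -s) (hsum : ∑ i, f i = 0) :
    2 * #{i | f i = s} = Fintype.card ι := by
  have hpos : ∑ i with f i = s, f i = #{i | f i = s} * s := by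
    rw [Finset.sum_congr rfl fun i hi => (mem_filter.1 hi).2, sum_const, nsmul_eq_mul]
  have hneg : ∑ i with ¬f i = s, f i = -(#{i | ¬f i = s} * s) := by
    rw [Finset.sum_congr rfl fun i hi => (hf i).resolve_left (mem_filter.1 hi).2, sum_const,
      nsmul_eq_mul, mul_neg]
  have h := sum_filter_add_sum_filter_not univ (fun i => f i = s) f
  rw [hpos, hneg, hsum, ← sub_eq_add_neg, sub_eq_zero] at h
  have hcard := card_filter_add_card_filter_not (s := univ) (fun i => f i = s)
  rw [card_univ, ← Nat.cast_inj (R := ℝ).1 (mul_right_cancel₀ hs h)] at hcard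
  omega

theorem Submodule.exists_ne_zero_forall_notMem_eq_zero {𝕜 : Type*} [Field 𝕜] [DecidableEq V]
    (E : Submodule 𝕜 (V → 𝕜)) (U : Finset V) (h : Fintype.card V < finrank 𝕜 E + #U) :
    ∃ x ∈ E, x ≠ 0 ∧ ∀ v ∉ U, x v = 0 := by
  let restrict : E →ₗ[𝕜] ({v // v ∉ U} → 𝕜) := LinearMap.funLeft 𝕜 𝕜 Subtype.val ∘ₗ E.subtype
  have hdim : finrank 𝕜 ({v // v ∉ U} → 𝕜) < finrank 𝕜 E := by
    rw [finrank_fintype_fun_eq_card, Fintype.card_subtype_compl, Fintype.card_coe]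
    have := U.card_le_univ
    omega
  obtain ⟨⟨x, hxE⟩, hker, hx0⟩ :=
    (Submodule.ne_bot_iff _).1 (LinearMap.ker_ne_bot_of_finrank_lt hdim)
  exact ⟨x, hxE, fun h => hx0 (by simpa using h),
    fun v hv => congr_fun (LinearMap.mem_ker.1 hker : restrict ⟨x, hxE⟩ = 0) ⟨v, hv⟩⟩

namespace Matrix.IsHermitian

variable {𝕜 : Type*} [RCLike 𝕜] [DecidableEq V] {A : Matrix V V 𝕜} (hA : A.IsHermitian)
include hA

theorem eigenvalues_eq_sqrt_or_eq_neg_sqrt {c : ℝ} (hc : 0 ≤ c) (hsq : A ^ 2 = (c : 𝕜) • 1)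
    (i : V) : hA.eigenvalues i = √c ∨ hA.eigenvalues i = -√c := by
  rw [← sq_eq_sq_iff_eq_or_eq_neg, Real.sq_sqrt hc]
  set v := ⇑(hA.eigenvectorBasis i)
  have hv : v ≠ 0 := by
    simpa [v, WithLp.ofLp_eq_zero] using hA.eigenvectorBasis.orthonormal.ne_zero i
  have h : ((hA.eigenvalues i ^ 2 : ℝ) : 𝕜) • v = (c : 𝕜) • v := by
    calc ((hA.eigenvalues i ^ 2 : ℝ) : 𝕜) • v = A *ᵥ (A *ᵥ v) := by
          rw [hA.mulVec_eigenvectorBasis, mulVec_smul, hA.mulVec_eigenvectorBasis, smul_smul,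
            ← pow_two, RCLike.real_smul_eq_coe_smul (K := 𝕜)]
      _ = (c : 𝕜) • v := by rw [mulVec_mulVec, ← pow_two, hsq, smul_mulVec, one_mulVec]
  exact_mod_cast smul_left_injective 𝕜 hv h

theorem card_filter_eigenvalues_eq_le_finrank_eigenspace (μ : ℝ) :
    #{i | hA.eigenvalues i = μ} ≤ finrank 𝕜 (Module.End.eigenspace (toLin' A) (μ : 𝕜)) := by
  let b : {i // hA.eigenvalues i = μ} → V → 𝕜 := fun i => ⇑(hA.eigenvectorBasis i)
  have hb : LinearIndependent 𝕜 b :=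
    (hA.eigenvectorBasis.orthonormal.linearIndependent.comp _ Subtype.val_injective).map'
      (WithLp.linearEquiv 2 𝕜 (V → 𝕜)).toLinearMap (LinearEquiv.ker _)
  have hspan : Submodule.span 𝕜 (Set.range b) ≤ Module.End.eigenspace (toLin' A) (μ : 𝕜) := by
    refine Submodule.span_le.2 ?_
    rintro _ ⟨i, rfl⟩
    rw [SetLike.mem_coe, Module.End.mem_eigenspace_iff, toLin'_apply, hA.mulVec_eigenvectorBasis,
      i.2, RCLike.real_smul_eq_coe_smul (K := 𝕜)]
  calc #{i | hA.eigenvalues i = μ} = Fintype.card {i // hA.eigenvalues i = μ} :=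
        (Fintype.card_subtype _).symm
    _ = finrank 𝕜 (Submodule.span 𝕜 (Set.range b)) := (finrank_span_eq_card hb).symm
    _ ≤ _ := Submodule.finrank_mono hspan

theorem sum_eigenvalues_eq_zero (htr : A.trace = 0) : ∑ i, hA.eigenvalues i = 0 := by
  have := hA.trace_eq_sum_eigenvalues
  rw [htr] at this
  exact_mod_cast this.symm

end Matrix.IsHermitian

end

open scoped Classical

theorem stmt9_general (V : Type*) [Fintype V] (N d : ℕ) (hV : Fintype.card V = 2 * N)
    (G : SimpleGraph V)
    (A : Matrix V V ℂ) (hHerm : A.IsHermitian)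
    (hEdge : ∀ u v, G.Adj u v → ‖A u v‖ = 1)
    (hNonEdge : ∀ u v, ¬ G.Adj u v → A u v = 0)
    (hsq : A ^ 2 = (d : ℂ) • 1)
    (U : Finset V) (hU : N < U.card) :
    ∃ u ∈ U, Real.sqrt d ≤ (U.filter (fun v => G.Adj u v)).card := by
  rcases Nat.eq_zero_or_pos d with rfl | hd
  · obtain ⟨u, hu⟩ := card_pos.1 (N.zero_le.trans_lt hU)
    exact ⟨u, hu, by simp⟩
  have hpm := hHerm.eigenvalues_eq_sqrt_or_eq_neg_sqrt d.cast_nonneg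
    (by rw [hsq, RCLike.ofReal_natCast])
  have htrace : ∑ i, hHerm.eigenvalues i = 0 :=
    hHerm.sum_eigenvalues_eq_zero (sum_eq_zero fun v _ => hNonEdge v v G.irrefl)
  have hmult := Fintype.two_mul_card_filter_eq_of_sum_eq_zero (by positivity) hpm htrace
  have hdim := hHerm.card_filter_eigenvalues_eq_le_finrank_eigenspace √d
  obtain ⟨x, hxE, hx0, hxU⟩ :=
    Submodule.exists_ne_zero_forall_notMem_eq_zero _ U
      ((by omega : Fintype.card V < _ + #U).trans_le (Nat.add_le_add_right hdim _))
  obtain ⟨u, hu, hle⟩ := G.exists_norm_le_card_adj_of_mulVec_eq_smul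
    (fun u v h => (hEdge u v h).le) hNonEdge hx0 hxU
    ((toLin'_apply A x).symm.trans (Module.End.mem_eigenspace_iff.1 hxE))
  exact ⟨u, hu, by simpa [abs_of_nonneg (Real.sqrt_nonneg _)] using hle⟩

theorem stmt9 (V : Type*) [Fintype V] (N d : ℕ) (hV : Fintype.card V = 2 * N)
    (G : SimpleGraph V) (hreg : G.IsRegularOfDegree d)
    (A : Matrix V V ℂ) (hHerm : A.IsHermitian)
    (hEdge : ∀ u v, G.Adj u v → ‖A u v‖ = 1)
    (hNonEdge : ∀ u v, ¬ G.Adj u v → A u v = 0)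
    (hsq : A ^ 2 = (d : ℂ) • 1)
    (U : Finset V) (hU : N < U.card) :
    ∃ u ∈ U, Real.sqrt d ≤ (U.filter (fun v => G.Adj u v)).card :=
  stmt9_general V N d hV G A hHerm hEdge hNonEdge hsq U hU
end

section
/- Let G = Γ((Z/2Z)^n, S) be a Cayley graph whose generating set S is a Sidon set (all pairwise sums of distinct elements of S are distinct). Then any two distinct vertices of G that have a common neighbor have exactly two common neighbors. -/
open scoped Classical

def cayley (n : ℕ) (S : Set (Fin n → ZMod 2)) : SimpleGraph (Fin n → ZMod 2) where
  Adj x y := x ≠ y ∧ x + y ∈ S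
  symm := by
    constructor
    intro x y h
    exact ⟨h.1.symm, by rw [add_comm]; exact h.2⟩
  loopless := by
    constructor
    intro x h
    exact h.1 rfl

/-!
In an elementary abelian 2-group the generators `x + z` and `y + z` joining a common neighbour `z`
to `x` and `y` always sum to `x + y`. Since `S` is Sidon, this pair is determined by `x + y`, which
leaves only `z` and `x + y + z`; and the translation `w ↦ x + y + w` swaps the neighbourhoods of `x`
and `y`, so both really occur.
-/

def IsSidon {G : Type*} [Add G] (S : Set G) : Prop :=
  ∀ s₁ ∈ S, ∀ s₂ ∈ S, ∀ s₃ ∈ S, ∀ s₄ ∈ S,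
    s₁ ≠ s₂ → s₃ ≠ s₄ → s₁ + s₂ = s₃ + s₄ → ({s₁, s₂} : Set G) = {s₃, s₄}

namespace ZModModule

variable {G : Type*} [AddCommGroup G] [Module (ZMod 2) G]

lemma add_eq_zero_iff_eq {a b : G} : a + b = 0 ↔ a = b := by
  rw [add_eq_zero_iff_eq_neg, neg_eq_self]

lemma add_add_add_cancel_right (x y z : G) : (x + z) + (y + z) = x + y := by
  rw [add_comm y z, add_add_add_cancel]

lemma add_add_add_cancel_left (x y z : G) : y + (x + y + z) = x + z := by
  rw [add_comm x y, add_assoc y x z, ← add_assoc, add_self, zero_add]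

lemma eq_or_eq_add_add_of_isSidon {S : Set G} (hS : IsSidon S) {x y z w : G} (hxy : x ≠ y)
    (hxz : x + z ∈ S) (hyz : y + z ∈ S) (hxw : x + w ∈ S) (hyw : y + w ∈ S) :
    w = z ∨ w = x + y + z := by
  have hpair : ({x + w, y + w} : Set G) = {x + z, y + z} :=
    hS _ hxw _ hyw _ hxz _ hyz ((add_left_injective w).ne hxy) ((add_left_injective z).ne hxy)
      (by rw [add_add_add_cancel_right, add_add_add_cancel_right])
  have hmem : x + w ∈ ({x + z, y + z} : Set G) := hpair ▸ Set.mem_insert _ _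
  rcases hmem with h | h
  · exact .inl (add_left_cancel h)
  · right
    rw [eq_sub_of_add_eq' h, sub_eq_add, add_comm (y + z), add_assoc]

end ZModModule

open ZModModule

lemma cayley_adj_iff {n : ℕ} {S : Set (Fin n → ZMod 2)} {a b : Fin n → ZMod 2} :
    (cayley n S).Adj a b ↔ a + b ≠ 0 ∧ a + b ∈ S := by
  rw [Ne, add_eq_zero_iff_eq]
  rfl

lemma cayley_adj_add_add_iff {n : ℕ} {S : Set (Fin n → ZMod 2)} {x y z : Fin n → ZMod 2} :
    (cayley n S).Adj y (x + y + z) ↔ (cayley n S).Adj x z := by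
  rw [cayley_adj_iff, cayley_adj_iff, add_add_add_cancel_left]

lemma cayley_commonNeighbors_eq_pair {n : ℕ} {S : Set (Fin n → ZMod 2)} (hS : IsSidon S)
    {x y z : Fin n → ZMod 2} (hxy : x ≠ y) (hz : z ∈ (cayley n S).commonNeighbors x y) :
    (cayley n S).commonNeighbors x y = {z, x + y + z} := by
  obtain ⟨hxz, hyz⟩ := (cayley n S).mem_commonNeighbors.1 hz
  ext w
  rw [SimpleGraph.mem_commonNeighbors]
  constructor
  · rintro ⟨hxw, hyw⟩
    exact eq_or_eq_add_add_of_isSidon hS hxy hxz.2 hyz.2 hxw.2 hyw.2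
  · rintro (rfl | rfl)
    · exact ⟨hxz, hyz⟩
    · refine ⟨?_, cayley_adj_add_add_iff.2 hxz⟩
      rw [add_comm x y]
      exact cayley_adj_add_add_iff.2 hyz

theorem stmt10_general (n : ℕ) (S : Set (Fin n → ZMod 2))
    (hSidon : ∀ s₁ ∈ S, ∀ s₂ ∈ S, ∀ s₃ ∈ S, ∀ s₄ ∈ S,
      s₁ ≠ s₂ → s₃ ≠ s₄ → s₁ + s₂ = s₃ + s₄ →
      ({s₁, s₂} : Set (Fin n → ZMod 2)) = {s₃, s₄})
    (x y : Fin n → ZMod 2) (hxy : x ≠ y)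
    (hcommon : ∃ z, (cayley n S).Adj x z ∧ (cayley n S).Adj y z) :
    Set.ncard {z | (cayley n S).Adj x z ∧ (cayley n S).Adj y z} = 2 := by
  obtain ⟨z, hz⟩ := hcommon
  have hne : z ≠ x + y + z := fun h ↦
    hxy (add_eq_zero_iff_eq.1 (left_eq_add.1 (h.trans (add_comm _ _))))
  change ((cayley n S).commonNeighbors x y).ncard = 2
  rw [cayley_commonNeighbors_eq_pair hSidon hxy hz, Set.ncard_pair hne]

theorem stmt10 (n : ℕ) (S : Set (Fin n → ZMod 2)) (h0 : (0 : Fin n → ZMod 2) ∉ S)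
    (hSidon : ∀ s₁ ∈ S, ∀ s₂ ∈ S, ∀ s₃ ∈ S, ∀ s₄ ∈ S,
      s₁ ≠ s₂ → s₃ ≠ s₄ → s₁ + s₂ = s₃ + s₄ →
      ({s₁, s₂} : Set (Fin n → ZMod 2)) = {s₃, s₄})
    (x y : Fin n → ZMod 2) (hxy : x ≠ y)
    (hcommon : ∃ z, (cayley n S).Adj x z ∧ (cayley n S).Adj y z) :
    Set.ncard {z | (cayley n S).Adj x z ∧ (cayley n S).Adj y z} = 2 :=
  stmt10_general n S hSidon x y hxy hcommon
end

section
/- Let G = Γ((Z/2Z)^n, S) be a Cayley graph where S is a Sidon set. Then G admits an orthogonal signing (a symmetric ±1-signing of its adjacency matrix with pairwise orthogonal rows) if and only if there exists a labelling f: E(G) → Z/2Z such that every 4-cycle of G has an odd number of edges labelled 1. -/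
/-!
In the Cayley graph of a Sidon set `S`, distinct vertices `u`, `v` with a common neighbour `w`
have exactly the two common neighbours `w` and `u + v + w`: the pair `{u + x, v + x}` of elements
of `S` is determined by its sum `u + v`. So every 4-cycle consists of two opposite vertices and
all of their common neighbours, and the inner product of the rows `u`, `v` of a signing is the
sum of the two products of signs along the 4-cycle `u w v (u + v + w)`. It vanishes iff the
product of the four signs is `-1`; writing each sign as `(-1) ^ f e` turns orthogonality of the
rows into the condition that every 4-cycle has odd label sum.
-/

open scoped Classical

/-- An orthogonal signing of a graph `G` on a finite vertex set: a symmetric matrix with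
entries `±1` on edges and `0` elsewhere, whose distinct rows are orthogonal. -/
def IsOrthSigning {V : Type*} [Fintype V] (G : SimpleGraph V) (M : Matrix V V ℝ) : Prop :=
  M.IsSymm ∧ (∀ u v, G.Adj u v → M u v = 1 ∨ M u v = -1) ∧
    (∀ u v, ¬ G.Adj u v → M u v = 0) ∧
    (∀ u v, u ≠ v → ∑ w, M u w * M v w = 0)

open Finset

def IsSidonSet {α : Type*} [Add α] (S : Set α) : Prop :=
  ∀ s₁ ∈ S, ∀ s₂ ∈ S, ∀ s₃ ∈ S, ∀ s₄ ∈ S,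
    s₁ ≠ s₂ → s₃ ≠ s₄ → s₁ + s₂ = s₃ + s₄ → ({s₁, s₂} : Set α) = {s₃, s₄}

lemma zmod_two_eq_zero_or_one (a : ZMod 2) : a = 0 ∨ a = 1 := by
  revert a; decide

noncomputable def toSign (a : ZMod 2) : ℝ := if a = 0 then 1 else -1

lemma toSign_add (a b : ZMod 2) : toSign (a + b) = toSign a * toSign b := by
  rcases zmod_two_eq_zero_or_one a with rfl | rfl <;>
    rcases zmod_two_eq_zero_or_one b with rfl | rfl <;>
    simp [toSign, CharTwo.add_self_eq_zero]

lemma toSign_add_toSign_eq_zero_iff {a b : ZMod 2} : toSign a + toSign b = 0 ↔ a + b = 1 := by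
  rcases zmod_two_eq_zero_or_one a with rfl | rfl <;>
    rcases zmod_two_eq_zero_or_one b with rfl | rfl <;>
    simp [toSign, CharTwo.add_self_eq_zero]

lemma toSign_eq_one_or_neg_one (a : ZMod 2) : toSign a = 1 ∨ toSign a = -1 := by
  unfold toSign; split_ifs <;> simp

lemma toSign_ite_eq {x : ℝ} (hx : x = 1 ∨ x = -1) : toSign (if x = 1 then 0 else 1) = x := by
  rcases hx with rfl | rfl <;> norm_num [toSign]

section Signing

variable {V : Type*} {G : SimpleGraph V}

def IsOddOnFourCycles (G : SimpleGraph V) (f : Sym2 V → ZMod 2) : Prop :=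
  ∀ a b c d, G.Adj a b → G.Adj b c → G.Adj c d → G.Adj d a → a ≠ c → b ≠ d →
    f s(a, b) + f s(b, c) + f s(c, d) + f s(d, a) = 1

noncomputable def signingOfLabel (G : SimpleGraph V) (f : Sym2 V → ZMod 2) : Matrix V V ℝ :=
  Matrix.of fun u v ↦ if G.Adj u v then toSign (f s(u, v)) else 0

lemma signingOfLabel_of_adj (f : Sym2 V → ZMod 2) {u v : V} (h : G.Adj u v) :
    signingOfLabel G f u v = toSign (f s(u, v)) := if_pos h

lemma signingOfLabel_of_not_adj (f : Sym2 V → ZMod 2) {u v : V} (h : ¬ G.Adj u v) :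
    signingOfLabel G f u v = 0 := if_neg h

variable [Fintype V]

lemma isOrthSigning_signingOfLabel_iff (f : Sym2 V → ZMod 2) :
    IsOrthSigning G (signingOfLabel G f) ↔
      ∀ u v, u ≠ v → ∑ w, signingOfLabel G f u w * signingOfLabel G f v w = 0 := by
  refine ⟨fun h ↦ h.2.2.2, fun horth ↦ ⟨?_, fun u v h ↦ ?_, fun u v h ↦ ?_, horth⟩⟩
  · refine Matrix.IsSymm.ext fun u v ↦ ?_
    simp only [signingOfLabel, Matrix.of_apply, G.adj_comm, Sym2.eq_swap]
  · rw [signingOfLabel_of_adj f h]; exact toSign_eq_one_or_neg_one _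
  · exact signingOfLabel_of_not_adj f h

lemma IsOrthSigning.exists_eq_signingOfLabel {M : Matrix V V ℝ} (hM : IsOrthSigning G M) :
    ∃ f, M = signingOfLabel G f := by
  obtain ⟨hsymm, hsign, hzero, -⟩ := hM
  refine ⟨Sym2.lift ⟨fun u v ↦ if M u v = 1 then 0 else 1,
    fun u v ↦ by simp only [hsymm.apply v u]⟩, ?_⟩
  ext u v
  by_cases h : G.Adj u v
  · rw [signingOfLabel_of_adj _ h, Sym2.lift_mk, toSign_ite_eq (hsign u v h)]
  · rw [signingOfLabel_of_not_adj _ h, hzero u v h]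

lemma sum_mul_eq_sum_of_forall_adj_mem {M : Matrix V V ℝ} (hM : ∀ u v, ¬ G.Adj u v → M u v = 0)
    {u v : V} {T : Finset V} (hT : ∀ w, G.Adj u w → G.Adj v w → w ∈ T) :
    ∑ w, M u w * M v w = ∑ w ∈ T, M u w * M v w := by
  refine (sum_subset (subset_univ T) fun w _ hw ↦ ?_).symm
  by_cases hu : G.Adj u w
  · rw [hM v w fun hv ↦ hw (hT w hu hv), mul_zero]
  · rw [hM u w hu, zero_mul]

end Signing

section Cayley

variable {n : ℕ} {S : Set (Fin n → ZMod 2)} {u v w x : Fin n → ZMod 2}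

lemma eq_of_add_eq_zero_of_zmod_two (h : u + v = 0) : u = v := by
  rwa [← ZModModule.sub_eq_add, sub_eq_zero] at h

lemma cayley_adj_add_add (h : (cayley n S).Adj v w) : (cayley n S).Adj u (u + v + w) := by
  have hsum : u + (u + v + w) = v + w := by
    rw [← add_assoc, ← add_assoc, ZModModule.add_self, zero_add]
  refine ⟨fun huw ↦ h.1 (eq_of_add_eq_zero_of_zmod_two ?_), hsum ▸ h.2⟩
  rw [← hsum, ← huw, ZModModule.add_self]

lemma ne_add_add (huv : u ≠ v) : w ≠ u + v + w := fun h ↦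
  huv (eq_of_add_eq_zero_of_zmod_two (by rw [← add_right_cancel_iff (a := w), ← h, zero_add]))

lemma cayley_eq_or_eq_add_add (hS : IsSidonSet S) (huv : u ≠ v)
    (hu : (cayley n S).Adj u w) (hv : (cayley n S).Adj v w)
    (hux : (cayley n S).Adj u x) (hvx : (cayley n S).Adj v x) : x = w ∨ x = u + v + w := by
  have hsum : (u + x) + (v + x) = (u + w) + (v + w) := by
    rw [add_comm v x, add_comm v w, ZModModule.add_add_add_cancel,
      ZModModule.add_add_add_cancel]
  have hpair := hS _ hux.2 _ hvx.2 _ hu.2 _ hv.2 (fun h ↦ huv (add_right_cancel h))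
    (fun h ↦ huv (add_right_cancel h)) hsum
  have hmem : u + x ∈ ({u + w, v + w} : Set (Fin n → ZMod 2)) := hpair ▸ Set.mem_insert _ _
  rcases hmem with h | h
  · exact Or.inl (add_left_cancel h)
  · right
    rw [add_assoc, ← h, ← add_assoc, ZModModule.add_self, zero_add]

lemma cayley_sum_mul_eq {M : Matrix (Fin n → ZMod 2) (Fin n → ZMod 2) ℝ} (hS : IsSidonSet S)
    (hM : ∀ u v, ¬ (cayley n S).Adj u v → M u v = 0) (huv : u ≠ v)
    (hu : (cayley n S).Adj u w) (hv : (cayley n S).Adj v w) :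
    ∑ x, M u x * M v x = M u w * M v w + M u (u + v + w) * M v (u + v + w) := by
  rw [sum_mul_eq_sum_of_forall_adj_mem hM (T := {w, u + v + w}) fun x hux hvx ↦ ?_,
    sum_pair (ne_add_add huv)]
  simpa using cayley_eq_or_eq_add_add hS huv hu hv hux hvx

lemma cayley_sum_signingOfLabel_eq_zero_iff (hS : IsSidonSet S)
    (f : Sym2 (Fin n → ZMod 2) → ZMod 2) (huv : u ≠ v)
    (hu : (cayley n S).Adj u w) (hv : (cayley n S).Adj v w) :
    ∑ x, signingOfLabel (cayley n S) f u x * signingOfLabel (cayley n S) f v x = 0 ↔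
      f s(u, w) + f s(w, v) + f s(v, u + v + w) + f s(u + v + w, u) = 1 := by
  rw [cayley_sum_mul_eq hS (fun _ _ ↦ signingOfLabel_of_not_adj f) huv hu hv,
    signingOfLabel_of_adj f hu, signingOfLabel_of_adj f hv,
    signingOfLabel_of_adj f (cayley_adj_add_add hv),
    signingOfLabel_of_adj f (add_comm v u ▸ cayley_adj_add_add hu),
    ← toSign_add, ← toSign_add, toSign_add_toSign_eq_zero_iff, Sym2.eq_swap (a := v) (b := w),
    Sym2.eq_swap (a := u) (b := u + v + w), add_comm (f s(u + v + w, u)), ← add_assoc]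

lemma cayley_isOrthSigning_signingOfLabel_iff (hS : IsSidonSet S)
    (f : Sym2 (Fin n → ZMod 2) → ZMod 2) :
    IsOrthSigning (cayley n S) (signingOfLabel (cayley n S) f) ↔
      IsOddOnFourCycles (cayley n S) f := by
  rw [isOrthSigning_signingOfLabel_iff]
  constructor
  · intro horth a b c d hab hbc hcd hda hac hbd
    obtain rfl : d = a + c + b :=
      (cayley_eq_or_eq_add_add hS hac hab hbc.symm hda.symm hcd).resolve_left hbd.symm
    exact (cayley_sum_signingOfLabel_eq_zero_iff hS f hac hab hbc.symm).1 (horth a c hac)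
  · intro hodd u v huv
    by_cases hcommon : ∃ w, (cayley n S).Adj u w ∧ (cayley n S).Adj v w
    · obtain ⟨w, hu, hv⟩ := hcommon
      refine (cayley_sum_signingOfLabel_eq_zero_iff hS f huv hu hv).2 <|
        hodd u w v _ hu hv.symm ?_ (cayley_adj_add_add hv).symm huv (ne_add_add huv)
      exact add_comm v u ▸ cayley_adj_add_add hu
    · rw [sum_mul_eq_sum_of_forall_adj_mem (fun _ _ ↦ signingOfLabel_of_not_adj f) (T := ∅)
        fun w hu hv ↦ (hcommon ⟨w, hu, hv⟩).elim, sum_empty]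

end Cayley

theorem stmt11_general (n : ℕ) (S : Set (Fin n → ZMod 2))
    (hSidon : ∀ s₁ ∈ S, ∀ s₂ ∈ S, ∀ s₃ ∈ S, ∀ s₄ ∈ S,
      s₁ ≠ s₂ → s₃ ≠ s₄ → s₁ + s₂ = s₃ + s₄ →
      ({s₁, s₂} : Set (Fin n → ZMod 2)) = {s₃, s₄}) :
    (∃ M : Matrix (Fin n → ZMod 2) (Fin n → ZMod 2) ℝ, IsOrthSigning (cayley n S) M) ↔
    (∃ f : Sym2 (Fin n → ZMod 2) → ZMod 2,
      ∀ a b c d : Fin n → ZMod 2,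
        (cayley n S).Adj a b → (cayley n S).Adj b c → (cayley n S).Adj c d →
        (cayley n S).Adj d a → a ≠ c → b ≠ d →
        f s(a, b) + f s(b, c) + f s(c, d) + f s(d, a) = 1) := by
  constructor
  · rintro ⟨M, hM⟩
    obtain ⟨f, rfl⟩ := hM.exists_eq_signingOfLabel
    exact ⟨f, (cayley_isOrthSigning_signingOfLabel_iff hSidon f).1 hM⟩
  · rintro ⟨f, hf⟩
    exact ⟨_, (cayley_isOrthSigning_signingOfLabel_iff hSidon f).2 hf⟩

theorem stmt11 (n : ℕ) (S : Set (Fin n → ZMod 2)) (h0 : (0 : Fin n → ZMod 2) ∉ S)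
    (hSidon : ∀ s₁ ∈ S, ∀ s₂ ∈ S, ∀ s₃ ∈ S, ∀ s₄ ∈ S,
      s₁ ≠ s₂ → s₃ ≠ s₄ → s₁ + s₂ = s₃ + s₄ →
      ({s₁, s₂} : Set (Fin n → ZMod 2)) = {s₃, s₄}) :
    (∃ M : Matrix (Fin n → ZMod 2) (Fin n → ZMod 2) ℝ, IsOrthSigning (cayley n S) M) ↔
    (∃ f : Sym2 (Fin n → ZMod 2) → ZMod 2,
      ∀ a b c d : Fin n → ZMod 2,
        (cayley n S).Adj a b → (cayley n S).Adj b c → (cayley n S).Adj c d →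
        (cayley n S).Adj d a → a ≠ c → b ≠ d →
        f s(a, b) + f s(b, c) + f s(c, d) + f s(d, a) = 1) :=
  stmt11_general n S hSidon
end

section
/- For n ≥ 2 with n ≡ 1 or 2 (mod 4), the Cayley graph Q₊ⁿ of (Z/2Z)^n with generating set {e₁, …, eₙ, e₁+⋯+eₙ} admits no orthogonal signing. -/
open scoped Classical

/-- The generating set `{e₁, …, eₙ, e₁ + ⋯ + eₙ}` of `Q₊ⁿ`. -/
def QPlusGens (n : ℕ) : Set (Fin n → ZMod 2) :=
  Set.range (fun i : Fin n => Pi.single i 1) ∪ {∑ i : Fin n, Pi.single i 1}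

/-- The graph `Q₊ⁿ`. -/
def QPlus (n : ℕ) : SimpleGraph (Fin n → ZMod 2) := cayley n (QPlusGens n)

/-!
Let `σ` be the edge signs `M x y`. In `Q₊ⁿ` with `n ≠ 3` the only common neighbours of `x` and
`x + eᵢ + eⱼ` are `x + eᵢ` and `x + eⱼ`, and those of `x` and `x + 1 + eₖ` are `x + 1` and
`x + eₖ`, so orthogonality of these two rows says that each such 4-cycle has sign product `-1`.
Let `P` be the path `0, e₀, e₀ + e₁, …, 1` and `P + 1` its translate, a path from `1` to `0`.
The `n` squares between `P` and `P + 1` give `σ(P + 1) = (-1)ⁿ σ(P)` (both ends are the edge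
`{0, 1}`). Read backwards, `P + 1` adds the `eᵢ` in reverse order, and sorting its steps with
`n.choose 2` adjacent swaps gives `σ(P + 1) = (-1) ^ n.choose 2 • σ(P)`. For `n ≡ 1, 2 (mod 4)`
the exponents `n` and `n.choose 2` have different parity.
-/

section PathProd

variable {G R : Type*} [AddCommGroup G] [CommRing R]

def pathProd (w : G → G → R) : G → List G → R
  | _, [] => 1
  | x, g :: L => w x (x + g) * pathProd w (x + g) L

/-- For a symmetric `±1`-valued `w`: the square `x, x + g, x + g + h, x + h` has product `-1`. -/
def StepsAnticommute (w : G → G → R) (g h : G) : Prop :=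
  ∀ x, pathProd w x [g, h] = -pathProd w x [h, g]

variable {w : G → G → R}

@[simp] lemma pathProd_nil (x : G) : pathProd w x [] = 1 := rfl

@[simp] lemma pathProd_cons (x g : G) (L : List G) :
    pathProd w x (g :: L) = w x (x + g) * pathProd w (x + g) L := rfl

lemma pathProd_append (x : G) (L₁ L₂ : List G) :
    pathProd w x (L₁ ++ L₂) = pathProd w x L₁ * pathProd w (x + L₁.sum) L₂ := by
  induction L₁ generalizing x with
  | nil => simp
  | cons g L ih => simp [ih, mul_assoc, add_assoc]

lemma pathProd_reverse_eq [Module (ZMod 2) G] (hw : ∀ x y, w x y = w y x) (x : G) (L : List G) :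
    pathProd w (x + L.sum) L.reverse = pathProd w x L := by
  induction L generalizing x with
  | nil => simp
  | cons g L ih =>
    rw [List.reverse_cons, pathProd_append, List.sum_cons, ← add_assoc, ih, List.sum_reverse,
      add_assoc (x + g), ZModModule.add_self, add_zero]
    simp only [pathProd_cons, pathProd_nil, mul_one, add_assoc x g g, ZModModule.add_self,
      add_zero, hw (x + g) x, mul_comm]

lemma pathProd_ne_zero [NoZeroDivisors R] [Nontrivial R] {x : G} {L : List G}
    (hw : ∀ y, ∀ g ∈ L, w y (y + g) ≠ 0) : pathProd w x L ≠ 0 := by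
  induction L generalizing x with
  | nil => simp
  | cons g L ih =>
    simp only [List.forall_mem_cons] at hw
    exact mul_ne_zero ((hw _).1) (ih fun y h hh => (hw y).2 h hh)

lemma pathProd_cons_eq_neg_one_pow_mul {g : G} {L : List G}
    (hL : ∀ h ∈ L, StepsAnticommute w g h) (x : G) :
    pathProd w x (g :: L) = (-1) ^ L.length * pathProd w x (L ++ [g]) := by
  induction L generalizing x with
  | nil => simp
  | cons h L ih =>
    simp only [List.forall_mem_cons] at hL
    have hsq := hL.1 x
    simp only [pathProd_cons, pathProd_nil, mul_one] at hsq
    have := ih hL.2 (x + h)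
    simp only [pathProd_cons] at this ⊢
    rw [add_right_comm] at hsq ⊢
    rw [← mul_assoc, hsq, neg_mul, mul_assoc, this, List.cons_append, pathProd_cons,
      List.length_cons, pow_succ]
    ring

lemma pathProd_reverse {L : List G} (hL : L.Pairwise (StepsAnticommute w)) (x : G) :
    pathProd w x L.reverse = (-1) ^ L.length.choose 2 * pathProd w x L := by
  induction L generalizing x with
  | nil => simp
  | cons g L ih =>
    rw [List.pairwise_cons] at hL
    have hcons : pathProd w x (L ++ [g]) = (-1) ^ L.length * pathProd w x (g :: L) := by
      rw [pathProd_cons_eq_neg_one_pow_mul hL.1, ← mul_assoc, ← pow_add,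
        Even.neg_one_pow ⟨_, rfl⟩, one_mul]
    rw [List.reverse_cons, pathProd_append, ih hL.2, List.sum_reverse, mul_assoc,
      ← pathProd_append, hcons, ← mul_assoc, ← pow_add, List.length_cons,
      Nat.choose_succ_succ', Nat.choose_one_right, add_comm L.length]

lemma neg_one_pow_choose_two_eq_neg_one_pow_length [IsDomain R] [Module (ZMod 2) G]
    (hw : ∀ x y, w x y = w y x) {g : G} {L : List G} (hL : L.Pairwise (StepsAnticommute w))
    (hgL : ∀ h ∈ L, StepsAnticommute w g h) (hsum : L.sum = g)
    (hne : ∀ y, ∀ h ∈ g :: L, w y (y + h) ≠ 0) (x : G) :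
    (-1 : R) ^ L.length.choose 2 = (-1) ^ L.length := by
  have hladder := pathProd_cons_eq_neg_one_pow_mul hgL x
  have hback := pathProd_reverse_eq hw x L.reverse
  rw [List.reverse_reverse, List.sum_reverse, hsum, pathProd_reverse hL] at hback
  rw [pathProd_append, pathProd_cons, hsum, hback, pathProd_cons, pathProd_nil, add_assoc,
    ZModModule.add_self, add_zero, hw (x + g) x] at hladder
  have hfactor : ((-1 : R) ^ L.length.choose 2 - (-1) ^ L.length) *
      (w x (x + g) * pathProd w x L) = 0 := by
    linear_combination hladder
  refine sub_eq_zero.1 ((mul_eq_zero.1 hfactor).resolve_right (mul_ne_zero ?_ ?_))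
  · exact hne x g List.mem_cons_self
  · exact pathProd_ne_zero fun y h hh => hne y h (List.mem_cons_of_mem g hh)

end PathProd

section Gens
variable {n : ℕ}

lemma mem_qPlusGens {g : Fin n → ZMod 2} :
    g ∈ QPlusGens n ↔ (∃ i, Pi.single i 1 = g) ∨ g = 1 := by
  simp only [QPlusGens, Finset.univ_sum_single (fun _ : Fin n => (1 : ZMod 2))]
  rfl

lemma sum_ofFn_single_one (n : ℕ) :
    (List.ofFn fun i : Fin n => (Pi.single i 1 : Fin n → ZMod 2)).sum = 1 := by
  rw [List.sum_ofFn]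
  exact Finset.univ_sum_single _

lemma one_ne_zero_of_pos (hn : 0 < n) : (1 : Fin n → ZMod 2) ≠ 0 :=
  fun h => by simpa using congrFun h ⟨0, hn⟩

lemma eq_of_single_add_single_add_single_eq {i j l m : Fin n} (hij : i ≠ j)
    (h : Pi.single l 1 + Pi.single i 1 + Pi.single j 1 = (Pi.single m 1 : Fin n → ZMod 2)) :
    l = i ∨ l = j := by
  have hi := congrFun h i
  have hj := congrFun h j
  simp only [Pi.add_apply, Pi.single_apply] at hi hj
  split_ifs at hi hj <;> simp_all

lemma single_add_single_add_single_ne_one (h2 : 2 ≤ n) (h3 : n ≠ 3) (a b c : Fin n) :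
    Pi.single a 1 + Pi.single b 1 + Pi.single c 1 ≠ (1 : Fin n → ZMod 2) := by
  intro h
  have hcover : (Finset.univ : Finset (Fin n)) ⊆ {a, b, c} := by
    intro t _
    have ht := congrFun h t
    simp only [Pi.add_apply, Pi.single_apply, Pi.one_apply] at ht
    simp only [Finset.mem_insert, Finset.mem_singleton]
    split_ifs at ht <;> simp_all
  have hcard := (Finset.card_le_card hcover).trans Finset.card_le_three
  rw [Finset.card_univ, Fintype.card_fin] at hcard
  obtain rfl : n = 2 := by omega
  revert a b c h
  decide

lemma single_ne_one (h2 : 2 ≤ n) (i : Fin n) : Pi.single i 1 ≠ (1 : Fin n → ZMod 2) := by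
  obtain ⟨j, hj⟩ := Fintype.exists_ne_of_one_lt_card (by rw [Fintype.card_fin]; omega) i
  intro h
  simpa [hj] using congrFun h j

lemma qPlusGens_common_single_single (h2 : 2 ≤ n) (h3 : n ≠ 3) {i j : Fin n} (hij : i ≠ j)
    {a : Fin n → ZMod 2} (ha : a ∈ QPlusGens n)
    (ha' : a + Pi.single i 1 + Pi.single j 1 ∈ QPlusGens n) :
    a = Pi.single i 1 ∨ a = Pi.single j 1 := by
  rcases mem_qPlusGens.1 ha with ⟨l, rfl⟩ | rfl <;> rcases mem_qPlusGens.1 ha' with ⟨m, hm⟩ | hm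
  · rcases eq_of_single_add_single_add_single_eq hij hm.symm with rfl | rfl <;> simp
  · exact (single_add_single_add_single_ne_one h2 h3 l i j hm).elim
  · refine (single_add_single_add_single_ne_one h2 h3 i j m ?_).elim
    rw [hm, add_assoc 1, add_comm 1, ← add_assoc, ZModModule.add_self, zero_add]
  · have := congrFun hm i
    simp [hij] at this

lemma qPlusGens_common_one_single (h2 : 2 ≤ n) (h3 : n ≠ 3) (k : Fin n)
    {a : Fin n → ZMod 2} (ha : a ∈ QPlusGens n) (ha' : a + 1 + Pi.single k 1 ∈ QPlusGens n) :
    a = 1 ∨ a = Pi.single k 1 := by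
  rcases mem_qPlusGens.1 ha with ⟨l, rfl⟩ | rfl <;> rcases mem_qPlusGens.1 ha' with ⟨m, hm⟩ | hm
  · refine (single_add_single_add_single_ne_one h2 h3 l k m ?_).elim
    rw [hm, add_right_comm _ 1, ← add_assoc, ZModModule.add_self, zero_add]
  · obtain rfl : l = k := by
      by_contra hlk
      simpa [hlk] using congrFun hm l
    simp
  · simp
  · simp

end Gens

section Signing

lemma IsOrthSigning.adj_of_apply_ne_zero {V : Type*} [Fintype V] {G : SimpleGraph V}
    {M : Matrix V V ℝ} (hM : IsOrthSigning G M) {u v : V} (h : M u v ≠ 0) : G.Adj u v :=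
  by_contra fun hA => h (hM.2.2.1 u v hA)

variable {n : ℕ} {S : Set (Fin n → ZMod 2)} {M : Matrix (Fin n → ZMod 2) (Fin n → ZMod 2) ℝ}

lemma IsOrthSigning.apply_add_ne_zero (hM : IsOrthSigning (cayley n S) M)
    {g : Fin n → ZMod 2} (hg : g ∈ S) (hg0 : g ≠ 0) (x : Fin n → ZMod 2) : M x (x + g) ≠ 0 := by
  have hadj : (cayley n S).Adj x (x + g) :=
    ⟨by simpa using hg0, by rwa [← add_assoc, ZModModule.add_self, zero_add]⟩
  rcases hM.2.1 _ _ hadj with h | h <;> simp [h]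

lemma IsOrthSigning.stepsAnticommute (hM : IsOrthSigning (cayley n S) M)
    {g h : Fin n → ZMod 2} (hgh : g ≠ h) (hcommon : ∀ a ∈ S, a + g + h ∈ S → a = g ∨ a = h) :
    StepsAnticommute M g h := by
  intro x
  have hne : x ≠ x + g + h := by
    intro hx
    rw [add_assoc, left_eq_add] at hx
    exact hgh (by rw [eq_neg_of_add_eq_zero_left hx, ZModModule.neg_eq_self])
  have horth := hM.2.2.2 x (x + g + h) hne
  rw [Fintype.sum_eq_add (x + g) (x + h) (by simpa using hgh)] at horth
  · show M x (x + g) * (M (x + g) (x + g + h) * 1) = -(M x (x + h) * (M (x + h) (x + h + g) * 1))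
    rw [hM.1.apply (x + g) (x + g + h), hM.1.apply (x + h) (x + g + h)] at horth
    rw [add_right_comm x h g]
    linear_combination horth
  · rintro w ⟨hwg, hwh⟩
    by_contra hw
    obtain ⟨h1, h2⟩ := mul_ne_zero_iff.1 hw
    have hw' : w = x + (x + w) := by rw [← add_assoc, ZModModule.add_self, zero_add]
    rcases hcommon (x + w) (hM.adj_of_apply_ne_zero h1).2
      (by convert (hM.adj_of_apply_ne_zero h2).2 using 1; abel) with hg | hg
    · exact hwg (by rw [hw', hg])
    · exact hwh (by rw [hw', hg])

end Signing

lemma odd_choose_two_add_self {n : ℕ} (h : n % 4 = 1 ∨ n % 4 = 2) : Odd (n.choose 2 + n) := by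
  have key : n.choose 2 * 2 = n * (n - 1) := by
    rw [Nat.choose_two_right, Nat.div_mul_cancel (Nat.even_mul_pred_self n).two_dvd]
  rw [Nat.odd_iff]
  obtain ⟨t, rfl | rfl⟩ : ∃ t, n = 4 * t + 1 ∨ n = 4 * t + 2 := ⟨n / 4, by omega⟩
  · rw [show (4 * t + 1) * (4 * t + 1 - 1) = 4 * (t * (4 * t + 1)) by
      rw [Nat.add_sub_cancel]; ring] at key
    omega
  · rw [show (4 * t + 2) * (4 * t + 2 - 1) = 2 * (2 * (t * (4 * t + 3)) + 1) by
      rw [show 4 * t + 2 - 1 = 4 * t + 1 by omega]; ring] at key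
    omega

lemma neg_one_pow_choose_two_ne_neg_one_pow {n : ℕ} (h : n % 4 = 1 ∨ n % 4 = 2) :
    (-1 : ℝ) ^ n.choose 2 ≠ (-1) ^ n := by
  intro heq
  have hodd := (odd_choose_two_add_self h).neg_one_pow (α := ℝ)
  rw [pow_add, heq, ← pow_add, Even.neg_one_pow ⟨n, rfl⟩] at hodd
  norm_num at hodd

theorem stmt13 (n : ℕ) (hn : 2 ≤ n) (hmod : n % 4 = 1 ∨ n % 4 = 2) :
    ¬ ∃ M : Matrix (Fin n → ZMod 2) (Fin n → ZMod 2) ℝ, IsOrthSigning (QPlus n) M := by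
  rintro ⟨M, hM⟩
  have h3 : n ≠ 3 := by omega
  set L := List.ofFn fun i : Fin n => (Pi.single i 1 : Fin n → ZMod 2)
  have hpair : L.Pairwise (StepsAnticommute M) := List.pairwise_ofFn.2 fun i j hij =>
    hM.stepsAnticommute (fun h => hij.ne (by simpa [Pi.single_apply] using congrFun h i))
      fun a ha ha' => qPlusGens_common_single_single hn h3 hij.ne ha ha'
  have hone : ∀ g ∈ L, StepsAnticommute M 1 g := List.forall_mem_ofFn_iff.2 fun k =>
    hM.stepsAnticommute (single_ne_one hn k).symm
      fun a ha ha' => qPlusGens_common_one_single hn h3 k ha ha'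
  have hne : ∀ y, ∀ g ∈ 1 :: L, M y (y + g) ≠ 0 := by
    intro y g hg
    rcases List.mem_cons.1 hg with rfl | hg
    · exact hM.apply_add_ne_zero (mem_qPlusGens.2 (Or.inr rfl)) (one_ne_zero_of_pos (by omega)) y
    · obtain ⟨k, rfl⟩ := List.mem_ofFn.1 hg
      exact hM.apply_add_ne_zero (mem_qPlusGens.2 (Or.inl ⟨k, rfl⟩)) (by simp) y
  have key := neg_one_pow_choose_two_eq_neg_one_pow_length (fun x y => hM.1.apply y x)
    hpair hone (sum_ofFn_single_one n) hne 0
  rw [List.length_ofFn] at key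
  exact neg_one_pow_choose_two_ne_neg_one_pow hmod key
end

section
/- For n ≥ 2 with n ≡ 0 or 3 (mod 4), the Cayley graph Q₊ⁿ of (Z/2Z)^n with generating set {e₁, …, eₙ, e₁+⋯+eₙ} admits an orthogonal signing. -/
open scoped Classical

/-!
The signing puts `χₖ(u)` on the edge `{u, u + gₖ}`, where `gₖ` runs over the `n + 1` generators
and each `χₖ` is a `±1`-valued character of `(ZMod 2)ⁿ`. It is symmetric when `χₖ(gₖ) = 1`.
Two distinct rows `u`, `v` overlap only when `v = u + gₖ + gₗ`, along the two paths through
`u + gₖ` and `u + gₗ`, and these contributions cancel when `χₗ(gₖ) = -χₖ(gₗ)`.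
For `Pi.single i 1` take `u ↦ (-1) ^ ∑_{j<i} u_j` (the diagonal `R₀`-factors of `Aᵢ`);
anticommutation with these forces the character of the even coordinates for `e₁ + ⋯ + eₙ`
(the matrix `B`), which is trivial on `e₁ + ⋯ + eₙ` iff `⌈n/2⌉` is even, i.e. `n ≡ 0, 3 (mod 4)`.
-/

open Finset

lemma eq_add_iff_eq_add_of_add_self {G : Type*} [AddCommGroup G] (hG : ∀ x : G, x + x = 0)
    {u v a : G} : u = v + a ↔ v = u + a := by
  constructor <;> rintro rfl <;> rw [add_assoc, hG, add_zero]

lemma AddChar.eq_one_or_eq_neg_one {G : Type*} [AddCommGroup G] (hG : ∀ x : G, x + x = 0)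
    (χ : AddChar G ℝ) (x : G) : χ x = 1 ∨ χ x = -1 :=
  mul_self_eq_one_iff.mp (by rw [← AddChar.map_add_eq_mul, hG, AddChar.map_zero_eq_one])

section SignedCayley

variable {G ι : Type*} [AddCommGroup G] [Fintype ι]

noncomputable def signedCayleyMatrix (g : ι → G) (χ : ι → AddChar G ℝ) : Matrix G G ℝ :=
  Matrix.of fun u v => ∑ k, if v = u + g k then χ k u else 0

variable {g : ι → G} {χ : ι → AddChar G ℝ}

lemma signedCayleyMatrix_apply_add (hg : g.Injective) (u : G) (k : ι) :
    signedCayleyMatrix g χ u (u + g k) = χ k u := by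
  rw [signedCayleyMatrix, Matrix.of_apply, sum_eq_single k]
  · exact if_pos rfl
  · exact fun l _ hlk => if_neg fun h => hlk (hg (add_left_cancel h).symm)
  · exact fun h => absurd (mem_univ k) h

lemma signedCayleyMatrix_apply_eq_zero {u v : G} (h : ∀ k, v ≠ u + g k) :
    signedCayleyMatrix g χ u v = 0 :=
  sum_eq_zero fun k _ => if_neg (h k)

lemma signedCayleyMatrix_isSymm (hG : ∀ x : G, x + x = 0) (hχg : ∀ k, χ k (g k) = 1) :
    (signedCayleyMatrix g χ).IsSymm := by
  ext u v
  simp only [Matrix.transpose_apply, signedCayleyMatrix, Matrix.of_apply]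
  refine sum_congr rfl fun k _ => ?_
  have hiff : u = v + g k ↔ v = u + g k := eq_add_iff_eq_add_of_add_self hG
  by_cases h : v = u + g k
  · rw [if_pos (hiff.mpr h), if_pos h, h, AddChar.map_add_eq_mul, hχg, mul_one]
  · rw [if_neg (mt hiff.mp h), if_neg h]

lemma sum_signedCayleyMatrix_mul [Fintype G] (u v : G) :
    ∑ w, signedCayleyMatrix g χ u w * signedCayleyMatrix g χ v w =
      ∑ k, ∑ l, if u + g k = v + g l then χ k u * χ l v else 0 := by
  simp only [signedCayleyMatrix, Matrix.of_apply, sum_mul_sum, ite_mul, mul_ite, zero_mul,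
    mul_zero]
  rw [sum_comm]
  refine sum_congr rfl fun k _ => ?_
  rw [sum_comm]
  refine sum_congr rfl fun l _ => ?_
  rw [sum_ite_eq' univ (v + g l), if_pos (mem_univ _)]
  exact if_congr eq_comm rfl rfl

lemma signedCayleyMatrix_rows_orthogonal [Fintype G] (hG : ∀ x : G, x + x = 0)
    (hχg : ∀ k, χ k (g k) = 1) (hanti : ∀ k l, k ≠ l → χ l (g k) = -χ k (g l))
    {u v : G} (huv : u ≠ v) :
    ∑ w, signedCayleyMatrix g χ u w * signedCayleyMatrix g χ v w = 0 := by
  set T : ι → ι → ℝ := fun k l => if u + g k = v + g l then χ k u * χ l v else 0 with hT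
  have hiff (k l : ι) : u + g k = v + g l ↔ v = u + g k + g l :=
    eq_add_iff_eq_add_of_add_self hG
  have hcancel (k l : ι) : T k l + T l k = 0 := by
    by_cases hkl : k = l
    · subst hkl
      simp only [hT, if_neg (fun h => huv (add_right_cancel h)), add_zero]
    by_cases h : v = u + g k + g l
    · have h' : v = u + g l + g k := h.trans (add_right_comm _ _ _)
      simp only [hT, if_pos ((hiff k l).mpr h), if_pos ((hiff l k).mpr h')]
      rw [h, AddChar.map_add_eq_mul, AddChar.map_add_eq_mul, AddChar.map_add_eq_mul,
        AddChar.map_add_eq_mul, hχg, hχg, hanti k l hkl]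
      ring
    · have h' : v ≠ u + g l + g k := fun h' => h (h'.trans (add_right_comm _ _ _))
      simp only [hT, if_neg (mt (hiff k l).mp h), if_neg (mt (hiff l k).mp h'), add_zero]
  have hsum : ∑ k, ∑ l, T k l + ∑ k, ∑ l, T k l = 0 := by
    conv_lhs => enter [2]; rw [sum_comm]
    simp only [← sum_add_distrib, hcancel, sum_const_zero]
  rw [sum_signedCayleyMatrix_mul]
  linarith

theorem isOrthSigning_signedCayleyMatrix [Fintype G] {Γ : SimpleGraph G}
    (hΓ : ∀ u v, Γ.Adj u v ↔ ∃ k, v = u + g k) (hG : ∀ x : G, x + x = 0) (hg : g.Injective)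
    (hχg : ∀ k, χ k (g k) = 1) (hanti : ∀ k l, k ≠ l → χ l (g k) = -χ k (g l)) :
    IsOrthSigning Γ (signedCayleyMatrix g χ) := by
  refine ⟨signedCayleyMatrix_isSymm hG hχg, ?_, ?_,
    fun u v => signedCayleyMatrix_rows_orthogonal hG hχg hanti⟩
  · intro u v huv
    obtain ⟨k, rfl⟩ := (hΓ u v).mp huv
    rw [signedCayleyMatrix_apply_add hg]
    exact (χ k).eq_one_or_eq_neg_one hG u
  · intro u v huv
    exact signedCayleyMatrix_apply_eq_zero fun k h => huv ((hΓ u v).mpr ⟨k, h⟩)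

end SignedCayley

section ParityChar

variable {ι : Type*}

noncomputable def parityChar (s : Finset ι) : AddChar (ι → ZMod 2) ℝ :=
  (AddChar.zmodChar 2 (by norm_num : (-1 : ℝ) ^ 2 = 1)).compAddMonoidHom
    (∑ j ∈ s, Pi.evalAddMonoidHom (fun _ => ZMod 2) j)

lemma parityChar_apply (s : Finset ι) (u : ι → ZMod 2) :
    parityChar s u = (-1) ^ (∑ j ∈ s, u j).val := by
  simp [parityChar, AddChar.zmodChar_apply]

lemma parityChar_single [DecidableEq ι] (s : Finset ι) (i : ι) :
    parityChar s (Pi.single i 1) = if i ∈ s then -1 else 1 := by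
  rw [parityChar_apply]
  split_ifs with h <;> simp [Pi.single_apply, h, ZMod.val_one]

lemma parityChar_one (s : Finset ι) : parityChar s 1 = (-1) ^ #s := by
  rw [parityChar_apply]
  simp [← neg_one_pow_eq_pow_mod_two]

end ParityChar

lemma Nat.count_even (n : ℕ) : Nat.count Even n = (n + 1) / 2 := by
  induction n with
  | zero => rfl
  | succ n ih =>
    rw [Nat.count_succ, ih]
    split_ifs with h <;> [obtain ⟨c, rfl⟩ := h; obtain ⟨c, rfl⟩ := Nat.not_even_iff_odd.mp h] <;>
      omega

lemma Fin.card_filter_even_val (n : ℕ) : #{j : Fin n | Even (j : ℕ)} = (n + 1) / 2 := by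
  rw [← Nat.count_even, Nat.count_eq_card_filter_range, ← Nat.Iio_eq_range,
    ← Fin.map_valEmbedding_univ, filter_map, card_map]
  rfl

namespace QPlus

noncomputable def gen (n : ℕ) : Option (Fin n) → Fin n → ZMod 2
  | none => 1
  | some i => Pi.single i 1

lemma add_self (n : ℕ) (x : Fin n → ZMod 2) : x + x = 0 :=
  funext fun j => CharTwo.add_self_eq_zero (x j)

lemma range_gen (n : ℕ) : Set.range (gen n) = QPlusGens n := by
  rw [QPlusGens, Finset.univ_sum_single (fun _ => (1 : ZMod 2)), Option.range_eq, Set.insert_eq,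
    Set.union_comm]
  rfl

lemma gen_ne_zero {n : ℕ} (hn : 0 < n) (k : Option (Fin n)) : gen n k ≠ 0 := by
  cases k with
  | none => exact fun h => one_ne_zero (congrFun h ⟨0, hn⟩)
  | some i => exact Pi.single_ne_zero_iff.mpr one_ne_zero

lemma adj_iff {n : ℕ} (hn : 0 < n) (u v : Fin n → ZMod 2) :
    (QPlus n).Adj u v ↔ ∃ k, v = u + gen n k := by
  change u ≠ v ∧ u + v ∈ QPlusGens n ↔ _
  rw [← range_gen]
  constructor
  · rintro ⟨-, k, hk⟩
    exact ⟨k, by rw [hk, ← add_assoc, add_self, zero_add]⟩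
  · rintro ⟨k, rfl⟩
    refine ⟨fun h => gen_ne_zero hn k ?_, k, ?_⟩
    · simpa using h
    · rw [← add_assoc, add_self, zero_add]

lemma gen_injective {n : ℕ} (hn : 2 ≤ n) : (gen n).Injective := by
  have single_ne_one (i : Fin n) : (Pi.single i 1 : Fin n → ZMod 2) ≠ 1 := by
    have : Nontrivial (Fin n) := Fin.nontrivial_iff_two_le.mpr hn
    obtain ⟨j, hj⟩ := exists_ne i
    intro h
    simpa [hj] using congrFun h j
  rintro (_ | i) (_ | j) h
  · rfl
  · exact absurd h.symm (single_ne_one j)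
  · exact absurd h (single_ne_one i)
  · congr 1
    by_contra hij
    simpa [gen, hij] using congrFun h i

noncomputable def char (n : ℕ) : Option (Fin n) → AddChar (Fin n → ZMod 2) ℝ
  | none => parityChar {j | Even (j : ℕ)}
  | some i => parityChar (Iio i)

lemma char_gen_self {n : ℕ} (hmod : n % 4 = 0 ∨ n % 4 = 3) (k : Option (Fin n)) :
    char n k (gen n k) = 1 := by
  cases k with
  | none =>
    rw [char, gen, parityChar_one, Fin.card_filter_even_val]
    exact Even.neg_one_pow (by rw [Nat.even_iff]; omega)
  | some i => simp [char, gen, parityChar_single]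

lemma char_none_gen_some {n : ℕ} (i : Fin n) :
    char n none (gen n (some i)) = -char n (some i) (gen n none) := by
  rw [char, char, gen, gen, parityChar_single, parityChar_one, Fin.card_Iio]
  rcases Nat.even_or_odd i with h | h
  · simp [h, h.neg_one_pow]
  · simp [Nat.not_even_iff_odd.mpr h, h.neg_one_pow]

lemma char_gen_anti {n : ℕ} (k l : Option (Fin n)) (hkl : k ≠ l) :
    char n l (gen n k) = -char n k (gen n l) := by
  rcases k with _ | i <;> rcases l with _ | j
  · exact absurd rfl hkl
  · exact neg_eq_iff_eq_neg.mp (char_none_gen_some j).symm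
  · exact char_none_gen_some i
  · have hij : i ≠ j := fun h => hkl (congrArg some h)
    simp only [char, gen, parityChar_single, mem_Iio]
    rcases hij.lt_or_gt with h | h <;> simp [h, h.not_gt]

end QPlus

theorem stmt14 (n : ℕ) (hn : 2 ≤ n) (hmod : n % 4 = 0 ∨ n % 4 = 3) :
    ∃ M : Matrix (Fin n → ZMod 2) (Fin n → ZMod 2) ℝ, IsOrthSigning (QPlus n) M :=
  ⟨signedCayleyMatrix (QPlus.gen n) (QPlus.char n),
    isOrthSigning_signedCayleyMatrix (QPlus.adj_iff (by omega)) (QPlus.add_self n)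
      (QPlus.gen_injective hn) (QPlus.char_gen_self hmod) QPlus.char_gen_anti⟩
end

section
/- Let A₁, …, Aₘ be pairwise anticommuting invertible complex N×N matrices. Then m ≤ 2·log₂(N) + 1. -/
namespace Stmt18Aux

/-- Base-3 digit uniqueness: if digits are bounded by 2 in absolute value and the
weighted sum vanishes, all digits vanish. -/
lemma base3 (n : ℕ) : ∀ (d : Fin n → ℤ), (∀ j, |d j| ≤ 2) →
    (∑ j, d j * 3 ^ (j : ℕ)) = 0 → ∀ j, d j = 0 := by
  induction n with
  | zero => exact fun d _ _ j => j.elim0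
  | succ n ih =>
    intro d hd hsum
    rw [Fin.sum_univ_succ] at hsum
    have hrw : ∑ i : Fin n, d i.succ * 3 ^ ((i.succ : Fin (n+1)) : ℕ)
        = 3 * ∑ i : Fin n, d i.succ * 3 ^ (i : ℕ) := by
      rw [Finset.mul_sum]
      refine Finset.sum_congr rfl fun i _ => ?_
      have h : ((i.succ : Fin (n+1)) : ℕ) = (i : ℕ) + 1 := rfl
      rw [h]; ring
    rw [hrw] at hsum
    have h0 : d 0 = 0 := by
      have habs := abs_le.mp (hd 0)
      have h3 : d 0 = 3 * (-(∑ i : Fin n, d i.succ * 3 ^ (i : ℕ))) := by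
        have h00 : ((0 : Fin (n+1)) : ℕ) = 0 := rfl
        rw [h00] at hsum
        simp only [pow_zero, mul_one] at hsum
        linarith
      set s := ∑ i : Fin n, d i.succ * 3 ^ (i : ℕ)
      omega
    have hsum' : (∑ i : Fin n, d i.succ * 3 ^ (i : ℕ)) = 0 := by
      have h00 : ((0 : Fin (n+1)) : ℕ) = 0 := rfl
      rw [h00, h0] at hsum
      simp only [zero_mul, zero_add] at hsum
      omega
    have htail := ih (fun i => d i.succ) (fun i => hd i.succ) hsum'
    intro j
    rcases Fin.eq_zero_or_eq_succ j with h | ⟨i, rfl⟩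
    · rw [h]; exact h0
    · exact htail i

variable {N k : ℕ}

/-- The ordered product of the matrices indexed by a subset of `Fin k`. -/
noncomputable def P (A : Fin (k+1) → Matrix (Fin N) (Fin N) ℂ) (S : Finset (Fin k)) :
    Matrix (Fin N) (Fin N) ℂ :=
  (S.toList.map fun i => A i.castSucc).prod

/-- The number of elements of `S` whose `castSucc` differs from `j`. -/
noncomputable def cnt (S : Finset (Fin k)) (j : Fin (k+1)) : ℕ :=
  S.toList.countP fun i => decide ((i.castSucc : Fin (k+1)) ≠ j)

/-- The integer eigenvalue attached to a subset. -/
noncomputable def muZ (S : Finset (Fin k)) : ℤ :=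
  ∑ j : Fin (k+1), (-1) ^ (cnt S j) * 3 ^ (j : ℕ)

lemma cnt_eq (S : Finset (Fin k)) (j : Fin (k+1)) :
    cnt S j = (S.filter (fun i => (i.castSucc : Fin (k+1)) ≠ j)).card := by
  unfold cnt
  have h1 : (S.toList : Multiset (Fin k)) = S.val := S.val.coe_toList
  rw [← Multiset.coe_countP, h1, Multiset.countP_eq_card_filter]
  rfl

lemma cnt_last (S : Finset (Fin k)) : cnt S (Fin.last k) = S.card := by
  rw [cnt_eq]
  congr 1
  rw [Finset.filter_true_of_mem]
  intro i _
  exact (Fin.castSucc_lt_last i).ne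

lemma cnt_castSucc (S : Finset (Fin k)) (i : Fin k) :
    cnt S i.castSucc = (S.erase i).card := by
  rw [cnt_eq]
  congr 1
  ext x
  simp [Finset.mem_erase, Fin.castSucc_inj, and_comm]

lemma mem_aux (S T : Finset (Fin k)) (i : Fin k)
    (hlast : (-1:ℤ) ^ S.card = (-1) ^ T.card)
    (hi : (-1:ℤ) ^ (S.erase i).card = (-1) ^ (T.erase i).card)
    (hiS : i ∈ S) : i ∈ T := by
  by_contra hiT
  rw [Finset.erase_eq_of_notMem hiT] at hi
  have hc : (S.erase i).card + 1 = S.card := Finset.card_erase_add_one hiS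
  rw [← hc, pow_succ] at hlast
  rcases neg_one_pow_eq_or ℤ (S.erase i).card with h | h <;>
    rcases neg_one_pow_eq_or ℤ T.card with h' | h' <;>
      rw [h, h'] at hi hlast <;> omega

lemma muZ_injective : Function.Injective (muZ (k := k)) := by
  intro S T hST
  have hd : ∀ j : Fin (k+1), (-1:ℤ) ^ (cnt S j) = (-1) ^ (cnt T j) := by
    have hz := base3 (k+1) (fun j => (-1) ^ (cnt S j) - (-1) ^ (cnt T j)) ?_ ?_
    · intro j
      have := hz j
      omega
    · intro j
      have h1 : |(-1:ℤ) ^ (cnt S j)| = 1 := by simp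
      have h2 : |(-1:ℤ) ^ (cnt T j)| = 1 := by simp
      calc |(-1:ℤ) ^ (cnt S j) - (-1) ^ (cnt T j)|
          ≤ |(-1:ℤ) ^ (cnt S j)| + |(-1:ℤ) ^ (cnt T j)| := abs_sub _ _
        _ ≤ 2 := by rw [h1, h2]; norm_num
    · have : muZ S - muZ T = 0 := by rw [hST, sub_self]
      unfold muZ at this
      rw [← Finset.sum_sub_distrib] at this
      rw [← this]
      refine Finset.sum_congr rfl fun j _ => ?_
      ring
  ext i
  have hlast := hd (Fin.last k)
  have hi := hd i.castSucc
  rw [cnt_last, cnt_last] at hlast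
  rw [cnt_castSucc, cnt_castSucc] at hi
  exact ⟨mem_aux S T i hlast hi, mem_aux T S i hlast.symm hi.symm⟩

/-- Moving `A j` past a product of the `A i.castSucc` picks up a sign for each
factor with index different from `j`. -/
lemma swapList (A : Fin (k+1) → Matrix (Fin N) (Fin N) ℂ)
    (hAC : ∀ i j, i ≠ j → A i * A j = -(A j * A i)) (j : Fin (k+1)) :
    ∀ L : List (Fin k),
      A j * (L.map fun i => A i.castSucc).prod
        = ((-1 : ℂ) ^ (L.countP fun i => decide ((i.castSucc : Fin (k+1)) ≠ j)))
            • ((L.map fun i => A i.castSucc).prod * A j) := by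
  intro L
  induction L with
  | nil => simp
  | cons a L ih =>
    simp only [List.map_cons, List.prod_cons, List.countP_cons]
    set p := (L.map fun i => A i.castSucc).prod with hp
    by_cases h : (a.castSucc : Fin (k+1)) = j
    · have hcount : (decide ((a.castSucc : Fin (k+1)) ≠ j)) = false := by simp [h]
      rw [hcount]
      subst h
      rw [mul_assoc, ih, mul_smul_comm]
      simp [mul_assoc]
    · have hne : j ≠ a.castSucc := fun hh => h hh.symm
      have hcount : (decide ((a.castSucc : Fin (k+1)) ≠ j)) = true := by simpa using h
      rw [hcount]
      have h1 : A j * A a.castSucc = -(A a.castSucc * A j) := hAC j a.castSucc hne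
      calc A j * (A a.castSucc * p)
          = (A j * A a.castSucc) * p := by rw [mul_assoc]
        _ = -(A a.castSucc * (A j * p)) := by rw [h1]; simp [mul_assoc]
        _ = -(A a.castSucc * (((-1:ℂ) ^ (L.countP fun i => decide ((i.castSucc : Fin (k+1)) ≠ j))) • (p * A j))) := by rw [ih]
        _ = ((-1:ℂ) ^ ((L.countP fun i => decide ((i.castSucc : Fin (k+1)) ≠ j)) + 1)) • (A a.castSucc * p * A j) := by
            rw [pow_succ]
            simp [mul_smul_comm, mul_assoc]

lemma key (hN : 0 < N) (A : Fin (k+1) → Matrix (Fin N) (Fin N) ℂ)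
    (hInv : ∀ i, IsUnit (A i))
    (hAC : ∀ i j, i ≠ j → A i * A j + A j * A i = 0) :
    2 ^ k ≤ N ^ 2 := by
  haveI : Nonempty (Fin N) := Fin.pos_iff_nonempty.mp hN
  have hAC' : ∀ i j, i ≠ j → A i * A j = -(A j * A i) := fun i j h =>
    eq_neg_of_add_eq_zero_left (hAC i j h)
  -- inverses
  set B : Fin (k+1) → Matrix (Fin N) (Fin N) ℂ := fun j => ↑(hInv j).unit⁻¹ with hB
  have hAB : ∀ j, A j * B j = 1 := by
    intro j
    have h := Units.mul_inv (hInv j).unit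
    rwa [IsUnit.unit_spec] at h
  -- eigen relation
  have heig : ∀ (j : Fin (k+1)) (S : Finset (Fin k)),
      A j * P A S * B j = ((-1:ℂ) ^ (cnt S j)) • P A S := by
    intro j S
    have h := swapList A hAC' j S.toList
    unfold P cnt
    rw [h, smul_mul_assoc, mul_assoc, hAB, mul_one]
  -- the operator
  set Φ : Module.End ℂ (Matrix (Fin N) (Fin N) ℂ) :=
    ∑ j : Fin (k+1), (3:ℂ) ^ (j:ℕ) •
      ((LinearMap.mulRight ℂ (B j)).comp (LinearMap.mulLeft ℂ (A j))) with hΦdef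
  have hΦ : ∀ S : Finset (Fin k), Φ (P A S) = ((muZ S : ℤ) : ℂ) • P A S := by
    intro S
    rw [hΦdef]
    simp only [LinearMap.sum_apply, LinearMap.smul_apply, LinearMap.comp_apply,
      LinearMap.mulLeft_apply, LinearMap.mulRight_apply]
    have hterm : ∀ j : Fin (k+1),
        (3:ℂ) ^ (j:ℕ) • (A j * P A S * B j)
          = (((-1:ℤ) ^ (cnt S j) * 3 ^ (j:ℕ) : ℤ) : ℂ) • P A S := by
      intro j
      rw [heig, smul_smul]
      push_cast
      ring_nf
    rw [Finset.sum_congr rfl fun j _ => hterm j, ← Finset.sum_smul]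
    congr 1
    unfold muZ
    push_cast
    ring
  -- eigenvectors are nonzero
  have hPunit : ∀ S : Finset (Fin k), IsUnit (P A S) := by
    intro S
    refine List.prod_isUnit ?_
    intro x hx
    rw [List.mem_map] at hx
    obtain ⟨i, _, rfl⟩ := hx
    exact hInv i.castSucc
  have hPne : ∀ S : Finset (Fin k), P A S ≠ 0 := fun S => (hPunit S).ne_zero
  -- linear independence
  have hμinj : Function.Injective (fun S : Finset (Fin k) => ((muZ S : ℤ) : ℂ)) := by
    intro S T h
    have h' : ((muZ S : ℤ) : ℂ) = ((muZ T : ℤ) : ℂ) := h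
    exact muZ_injective (by exact_mod_cast h')
  have hli : LinearIndependent ℂ (fun S : Finset (Fin k) => P A S) := by
    refine Module.End.eigenvectors_linearIndependent' Φ
      (fun S => ((muZ S : ℤ) : ℂ)) hμinj (fun S => P A S) ?_
    intro S
    exact ⟨Module.End.mem_eigenspace_iff.mpr (hΦ S), hPne S⟩
  have hcard := hli.fintype_card_le_finrank
  rw [Fintype.card_finset, Fintype.card_fin] at hcard
  have hfr : Module.finrank ℂ (Matrix (Fin N) (Fin N) ℂ) = N ^ 2 := by
    rw [Module.finrank_matrix, Module.finrank_self, Fintype.card_fin]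
    ring
  rw [hfr] at hcard
  exact hcard

end Stmt18Aux

theorem stmt18 (N m : ℕ) (hN : 0 < N) (A : Fin m → Matrix (Fin N) (Fin N) ℂ)
    (hInv : ∀ i, IsUnit (A i))
    (hAC : ∀ i j, i ≠ j → A i * A j + A j * A i = 0) :
    (m : ℝ) ≤ 2 * Real.logb 2 N + 1 := by
  have hN1 : (1:ℝ) ≤ (N:ℝ) := by exact_mod_cast hN
  have hlog : 0 ≤ Real.logb 2 N := Real.logb_nonneg one_lt_two hN1
  cases m with
  | zero => simp; linarith
  | succ k =>
    have hkey := Stmt18Aux.key hN A hInv hAC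
    have h2 : ((2:ℝ)) ^ k ≤ ((N:ℝ)) ^ 2 := by exact_mod_cast hkey
    have hlb : Real.logb 2 ((2:ℝ) ^ k) ≤ Real.logb 2 ((N:ℝ) ^ 2) :=
      Real.logb_le_logb_of_le one_lt_two (by positivity) h2
    rw [Real.logb_pow, Real.logb_pow, Real.logb_self_eq_one one_lt_two] at hlb
    norm_num at hlb
    push_cast
    linarith
end

section
/- The set of columns of the parity check matrix of a BCH code with designed distance 5 gives, for even n, a Sidon set in (Z/2Z)^n of size 2^(n/2): that is, the set {(x, x³) : x ∈ F_{2^{n/2}}} ⊆ F_{2^{n/2}} × F_{2^{n/2}} ≅ (Z/2Z)^n is a Sidon set, where F_{2^{n/2}} is the field with 2^{n/2} elements. -/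
theorem stmt19 (m : ℕ) (F : Type*) [Field F] [Fintype F]
    (hF : Fintype.card F = 2 ^ m) :
    let S : Set (F × F) := {p | ∃ x : F, p = (x, x ^ 3)}
    (∀ s₁ ∈ S, ∀ s₂ ∈ S, ∀ s₃ ∈ S, ∀ s₄ ∈ S,
      s₁ ≠ s₂ → s₃ ≠ s₄ → s₁ + s₂ = s₃ + s₄ →
      ({s₁, s₂} : Set (F × F)) = {s₃, s₄}) ∧
    S.ncard = 2 ^ m := by
  intro S
  have hm : 1 ≤ m := by
    by_contra h
    have hm0 : m = 0 := by omega
    have := Fintype.one_lt_card (α := F)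
    rw [hF, hm0] at this
    omega
  have h2 : (2 : F) = 0 := by
    have hc : ((Fintype.card F : ℕ) : F) = 0 := Nat.cast_card_eq_zero F
    rw [hF] at hc
    push_cast at hc
    exact pow_eq_zero_iff (by omega) |>.mp hc
  constructor
  · rintro s₁ ⟨a, rfl⟩ s₂ ⟨b, rfl⟩ s₃ ⟨c, rfl⟩ s₄ ⟨d, rfl⟩ h12 h34 heq
    have h1 : a + b = c + d := congrArg Prod.fst heq
    have h3 : a ^ 3 + b ^ 3 = c ^ 3 + d ^ 3 := congrArg Prod.snd heq
    have hab : a ≠ b := fun h => h12 (by rw [h])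
    have hd : d = a + b - c := by linear_combination -h1
    subst hd
    have hsum : a + b ≠ 0 := by
      intro h
      apply hab
      have hz : a - b = 0 := by linear_combination h + (-b) * h2
      exact sub_eq_zero.mp hz
    have key : (a + b) * ((c - a) * (c - b)) = 0 := by
      linear_combination (-1) * h3 + (-(a + b) * (c - a) * (c - b)) * h2
    rcases mul_eq_zero.mp key with h | h
    · exact absurd h hsum
    rcases mul_eq_zero.mp h with h | h
    · have hc : c = a := sub_eq_zero.mp h
      subst hc
      rw [add_sub_cancel_left]
    · have hc : c = b := sub_eq_zero.mp h
      subst hc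
      rw [add_sub_cancel_right, Set.pair_comm]
  · have hSeq : S = (fun x : F => (x, x ^ 3)) '' Set.univ := by
      ext p
      simp [S, eq_comm]
    rw [hSeq, Set.ncard_image_of_injective _ (fun x y h => (Prod.mk.injEq _ _ _ _).mp h |>.1),
      Set.ncard_univ, Nat.card_eq_fintype_card, hF]
end
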